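/- (ℛM is relatively uniformly Cauchy complete.) Let M be a frame, (g_n) a sequence of frame homomorphisms Opens ℝ → M, and f : Opens ℝ → M a frame homomorphism with f((−∞,0)) = ⊥. Suppose (g_n) is relatively uniformly Cauchy with regulator f: for every positive integer k there exists m_k such that for all i, j ≥ m_k and all ε > 0, ⨆_{s ∈ ℝ} [ (g_i((−∞,s)) ⊓ g_j((s+ε,∞))) ⊔ (g_j((−∞,s)) ⊓ g_i((s+ε,∞))) ] ≤ f((kε, ∞)). Then there exists a frame homomorphism g₀ : Opens ℝ → M such that (g_n) converges relatively uniformly to g₀ with regulator f: for every positive integer k there exists m_k such that for all n ≥ m_k and all ε > 0, ⨆_{s ∈ ℝ} [ (g₀((−∞,s)) ⊓ g_n((s+ε,∞))) ⊔ (g_n((−∞,s)) ⊓ g₀((s+ε,∞))) ] ≤ f((kε, ∞)). -/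

import Mathlib

/-!
The limit `g₀` is constructed through its values on the generators `(p, ∞)` and `(-∞, q)` of the
frame of reals, each a join of approximations by terms of the sequence. These values satisfy the
relations presenting `Opens ℝ` (compactness of `[p, q]` enters through a Lebesgue number), so they
define a frame homomorphism, and the Cauchy estimate for the approximating terms passes to `g₀`.
-/

open TopologicalSpace Set

/-- The open interval `(a, ∞)` as an open subset of `ℝ`. -/
def oIoi (a : ℝ) : Opens ℝ := ⟨Set.Ioi a, isOpen_Ioi⟩

/-- The open interval `(-∞, a)` as an open subset of `ℝ`. -/
def oIio (a : ℝ) : Opens ℝ := ⟨Set.Iio a, isOpen_Iio⟩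

/-- The open interval `(a, b)` as an open subset of `ℝ`. -/
def oIoo (a b : ℝ) : Opens ℝ := ⟨Set.Ioo a b, isOpen_Ioo⟩

@[simp] lemma coe_oIoi (a : ℝ) : (oIoi a : Set ℝ) = Ioi a := rfl

@[simp] lemma coe_oIio (a : ℝ) : (oIio a : Set ℝ) = Iio a := rfl

@[simp] lemma mem_oIoi {a x : ℝ} : x ∈ oIoi a ↔ a < x := Iff.rfl

@[simp] lemma mem_oIio {a x : ℝ} : x ∈ oIio a ↔ x < a := Iff.rfl

lemma oIoi_anti : Antitone oIoi := fun _ _ h _ hx => lt_of_le_of_lt h hx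

lemma oIio_mono : Monotone oIio := fun _ _ h _ hx => lt_of_lt_of_le hx h

lemma oIoi_inf_oIio_eq_bot {a b : ℝ} (h : b ≤ a) : oIoi a ⊓ oIio b = ⊥ :=
  Opens.ext <| by simpa using Ioi_inter_Iio.trans (Ioo_eq_empty (not_lt.2 h))

lemma oIoi_sup_oIio_eq_top {a b : ℝ} (h : a < b) : oIoi a ⊔ oIio b = ⊤ :=
  Opens.ext <| by simpa [union_comm] using Iio_union_Ioi_of_lt h

lemma oIoi_eq_iSup (a : ℝ) : oIoi a = ⨆ (b : ℝ) (_ : a < b), oIoi b :=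
  Opens.ext <| by ext x; simpa using ⟨exists_between, fun ⟨_, hab, hbx⟩ => hab.trans hbx⟩

lemma oIio_eq_iSup (a : ℝ) : oIio a = ⨆ (b : ℝ) (_ : b < a), oIio b :=
  Opens.ext <| by
    ext x; simpa [and_comm] using ⟨exists_between, fun ⟨_, hxb, hba⟩ => hxb.trans hba⟩

lemma iSup_oIio : ⨆ q : ℝ, oIio q = ⊤ :=
  Opens.ext <| by ext x; simp

lemma iSup_oIoi_add (r : ℝ) : ⨆ p : ℝ, oIoi (p + r) = ⊤ :=
  Opens.ext <| by ext x; simpa using ⟨x - r - 1, by linarith⟩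

lemma iSup_oIio_sub (r : ℝ) : ⨆ q : ℝ, oIio (q - r) = ⊤ :=
  Opens.ext <| by ext x; simpa using ⟨x + r + 1, by linarith⟩

lemma iSup_oIio_nat_mul {δ : ℝ} (hδ : 0 < δ) : ⨆ k : ℕ, oIio ((k + 1) * δ) = ⊤ :=
  Opens.ext <| by
    ext x
    obtain ⟨k, hk⟩ := exists_nat_gt (x / δ)
    simpa using ⟨k, by rw [div_lt_iff₀ hδ] at hk; nlinarith⟩

lemma FrameHom.iSup_map_eq_top {α β : Type*} {ι : Sort*} [CompleteLattice α]
    [CompleteLattice β] (h : FrameHom α β) {s : ι → α} (hs : ⨆ i, s i = ⊤) : ⨆ i, h (s i) = ⊤ := by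
  rw [← map_iSup, hs, map_top]

/-- A frame homomorphism `Opens ℝ → M` given by the images `upper p` of `(p, ∞)` and `lower q`
of `(-∞, q)`, subject to the relations that present the frame of reals. -/
structure RealCut (M : Type*) [Order.Frame M] where
  upper : ℝ → M
  lower : ℝ → M
  upper_eq_iSup (p : ℝ) : upper p = ⨆ (p' : ℝ) (_ : p < p'), upper p'
  lower_eq_iSup (q : ℝ) : lower q = ⨆ (q' : ℝ) (_ : q' < q), lower q'
  upper_inf_lower {p q : ℝ} : q ≤ p → upper p ⊓ lower q = ⊥
  upper_sup_lower {p q : ℝ} : p < q → upper p ⊔ lower q = ⊤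
  iSup_upper : ⨆ p, upper p = ⊤
  iSup_lower : ⨆ q, lower q = ⊤

namespace RealCut

variable {M : Type*} [Order.Frame M] (c : RealCut M)

lemma upper_anti : Antitone c.upper := fun a b hab => by
  rcases hab.eq_or_lt with rfl | h
  · rfl
  · rw [c.upper_eq_iSup a]
    exact le_iSup₂_of_le (f := fun p' (_ : a < p') => c.upper p') b h le_rfl

lemma lower_mono : Monotone c.lower := fun a b hab => by
  rcases hab.eq_or_lt with rfl | h
  · rfl
  · rw [c.lower_eq_iSup b]
    exact le_iSup₂_of_le (f := fun q' (_ : q' < b) => c.lower q') a h le_rfl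

lemma upper_inf_lower_eq_iSup (p q : ℝ) :
    c.upper p ⊓ c.lower q =
      ⨆ (p' : ℝ) (_ : p < p') (q' : ℝ) (_ : q' < q), c.upper p' ⊓ c.lower q' := by
  conv_lhs => rw [c.upper_eq_iSup, c.lower_eq_iSup]
  simp only [iSup_inf_eq]
  simp only [inf_iSup_eq]

-- `Ioo p q` is `(p, ∞) ∩ (-∞, q)`, and an open set is the union of the intervals it contains.
def toFun (V : Opens ℝ) : M :=
  ⨆ (p : ℝ) (q : ℝ) (_ : Ioo p q ⊆ V), c.upper p ⊓ c.lower q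

variable {c}

lemma le_toFun {p q : ℝ} {V : Opens ℝ} (h : Ioo p q ⊆ V) : c.upper p ⊓ c.lower q ≤ c.toFun V :=
  le_iSup_of_le p <| le_iSup_of_le q <| le_iSup_of_le h le_rfl

lemma toFun_mono : Monotone c.toFun := fun _ _ hVW =>
  iSup_le fun _ => iSup₂_le fun _ h => le_toFun (h.trans hVW)

lemma toFun_inf (V W : Opens ℝ) : c.toFun (V ⊓ W) = c.toFun V ⊓ c.toFun W := by
  refine le_antisymm (le_inf (toFun_mono inf_le_left) (toFun_mono inf_le_right)) ?_
  simp only [toFun, iSup_inf_eq, inf_iSup_eq, iSup_le_iff]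
  intro p' q' hW p q hV
  refine le_trans ?_ (le_toFun (p := max p p') (q := min q q') ?_)
  · refine le_inf ?_ ?_
    · rcases le_total p p' with h | h <;>
        simp [h, inf_le_left.trans inf_le_left, inf_le_right.trans inf_le_left]
    · rcases le_total q q' with h | h <;>
        simp [h, inf_le_left.trans inf_le_right, inf_le_right.trans inf_le_right]
  · rw [← Ioo_inter_Ioo, Opens.coe_inf]
    exact inter_subset_inter hV hW

lemma toFun_top : c.toFun ⊤ = ⊤ := by
  refine top_le_iff.1 ?_
  calc ⊤ = ⨆ (p : ℝ) (q : ℝ), c.upper p ⊓ c.lower q := by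
        simp only [← inf_iSup_eq, c.iSup_lower, inf_top_eq, c.iSup_upper]
    _ ≤ c.toFun ⊤ := iSup₂_le fun _ _ => le_toFun (subset_univ _)

-- Split at `a + δ < a + 2δ`, where `upper (a + δ) ⊔ lower (a + 2δ) = ⊤`, and induct on `(b - a) / δ`.
lemma upper_inf_lower_le_of_forall_sub_le {X : M} {δ p q : ℝ} (hδ : 0 < δ)
    (h : ∀ a b, p ≤ a → b ≤ q → b - a ≤ 2 * δ → c.upper a ⊓ c.lower b ≤ X)
    {a b : ℝ} (ha : p ≤ a) (hb : b ≤ q) : c.upper a ⊓ c.lower b ≤ X := by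
  obtain ⟨n, hn⟩ := exists_nat_ge ((b - a) / δ)
  rw [div_le_iff₀ hδ] at hn
  induction n generalizing a with
  | zero => exact h a b ha hb (by simp at hn; linarith)
  | succ n ih =>
    rcases le_or_gt (b - a) (2 * δ) with hab | hab
    · exact h a b ha hb hab
    calc c.upper a ⊓ c.lower b
        = c.upper a ⊓ c.lower b ⊓ (c.upper (a + δ) ⊔ c.lower (a + 2 * δ)) := by
          rw [c.upper_sup_lower (by linarith), inf_top_eq]
      _ ≤ c.upper (a + δ) ⊓ c.lower b ⊔ c.upper a ⊓ c.lower (a + 2 * δ) := by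
          rw [inf_sup_left]
          exact sup_le_sup (le_inf inf_le_right (inf_le_left.trans inf_le_right))
            (le_inf (inf_le_left.trans inf_le_left) inf_le_right)
      _ ≤ X := sup_le (ih (by linarith) (by push_cast at hn; linarith))
          (h a _ ha (by linarith) (by linarith))

lemma upper_inf_lower_le_of_Icc_subset {S : Set (Opens ℝ)} {p q : ℝ}
    (hS : Icc p q ⊆ (sSup S : Opens ℝ)) :
    c.upper p ⊓ c.lower q ≤ ⨆ V ∈ S, c.toFun V := by
  rw [Opens.coe_sSup, biUnion_eq_iUnion] at hS
  obtain ⟨δ, hδ, hball⟩ :=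
    lebesgue_number_lemma_of_metric isCompact_Icc (fun V : S => (V : Opens ℝ).isOpen) hS
  refine upper_inf_lower_le_of_forall_sub_le hδ (fun a b ha hb hab => ?_) le_rfl le_rfl
  rcases le_or_gt b a with hba | hab'
  · rw [c.upper_inf_lower hba]
    exact bot_le
  obtain ⟨V, hV⟩ := hball ((a + b) / 2) ⟨by linarith, by linarith⟩
  have hIoo : Ioo a b ⊆ V := fun x hx => hV <| by
    rw [Real.ball_eq_Ioo]
    exact ⟨by linarith [hx.1], by linarith [hx.2]⟩
  exact (le_toFun hIoo).trans (le_iSup₂_of_le (f := fun V _ => c.toFun V) V.1 V.2 le_rfl)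

lemma toFun_sSup (S : Set (Opens ℝ)) : c.toFun (sSup S) = ⨆ V ∈ S, c.toFun V := by
  refine le_antisymm (iSup_le fun p => iSup₂_le fun q hpq => ?_)
    (iSup₂_le fun _ hV => toFun_mono (le_sSup hV))
  rw [c.upper_inf_lower_eq_iSup]
  exact iSup₂_le fun p' hp => iSup₂_le fun q' hq =>
    upper_inf_lower_le_of_Icc_subset ((Icc_subset_Ioo hp hq).trans hpq)

variable (c)

def toFrameHom : FrameHom (Opens ℝ) M where
  toFun := c.toFun
  map_inf' := toFun_inf
  map_top' := toFun_top
  map_sSup' S := by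
    rw [toFun_sSup, sSup_image]

lemma toFrameHom_oIoi (t : ℝ) : c.toFrameHom (oIoi t) = c.upper t := by
  refine le_antisymm (iSup_le fun p => iSup₂_le fun q hpq => ?_) ?_
  · rcases le_or_gt q p with h | h
    · rw [c.upper_inf_lower h]
      exact bot_le
    · have htp := closure_mono hpq
      rw [closure_Ioo h.ne, coe_oIoi, closure_Ioi] at htp
      exact inf_le_left.trans (c.upper_anti (htp (left_mem_Icc.2 h.le)))
  · calc c.upper t = ⨆ q, c.upper t ⊓ c.lower q := by
          rw [← inf_iSup_eq, c.iSup_lower, inf_top_eq]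
      _ ≤ _ := iSup_le fun q => le_toFun fun x hx => hx.1

lemma toFrameHom_oIio (t : ℝ) : c.toFrameHom (oIio t) = c.lower t := by
  refine le_antisymm (iSup_le fun p => iSup₂_le fun q hpq => ?_) ?_
  · rcases le_or_gt q p with h | h
    · rw [c.upper_inf_lower h]
      exact bot_le
    · have hqt := closure_mono hpq
      rw [closure_Ioo h.ne, coe_oIio, closure_Iio] at hqt
      exact inf_le_right.trans (c.lower_mono (hqt (right_mem_Icc.2 h.le)))
  · calc c.lower t = ⨆ p, c.upper p ⊓ c.lower t := by
          rw [← iSup_inf_eq, c.iSup_upper, top_inf_eq]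
      _ ≤ _ := iSup_le fun p => le_toFun fun x hx => hx.2

end RealCut

section RelativelyUniformLimit

variable {M : Type*} [Order.Frame M]

def IsRUCauchyModulus (g : ℕ → FrameHom (Opens ℝ) M) (f : FrameHom (Opens ℝ) M)
    (N : ℕ → ℕ) : Prop :=
  ∀ k i j, N k ≤ i → N k ≤ j → ∀ s ε : ℝ, 0 < ε →
    g i (oIio s) ⊓ g j (oIoi (s + ε)) ≤ f (oIoi ((k + 1) * ε))

variable (g : ℕ → FrameHom (Opens ℝ) M) (f : FrameHom (Opens ℝ) M) (N : ℕ → ℕ)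

/-- `limUpper p` and `limLower q` say `g₀ > p` and `g₀ < q`: some `g (N k)`, which is within
`f / (k + 1)` of the limit, exceeds `p` (resp. stays below `q`) by a margin `r > f / (k + 1)`. -/
def limUpper (p : ℝ) : M :=
  ⨆ (k : ℕ) (r : ℝ), g (N k) (oIoi (p + r)) ⊓ f (oIio ((k + 1) * r))

def limLower (q : ℝ) : M :=
  ⨆ (k : ℕ) (r : ℝ), g (N k) (oIio (q - r)) ⊓ f (oIio ((k + 1) * r))

variable {g f N}

lemma le_limUpper (p : ℝ) (k : ℕ) (r : ℝ) :
    g (N k) (oIoi (p + r)) ⊓ f (oIio ((k + 1) * r)) ≤ limUpper g f N p :=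
  le_iSup₂_of_le (f := fun (k : ℕ) (r : ℝ) => g (N k) (oIoi (p + r)) ⊓ f (oIio ((k + 1) * r)))
    k r le_rfl

lemma le_limLower (q : ℝ) (k : ℕ) (r : ℝ) :
    g (N k) (oIio (q - r)) ⊓ f (oIio ((k + 1) * r)) ≤ limLower g f N q :=
  le_iSup₂_of_le (f := fun (k : ℕ) (r : ℝ) => g (N k) (oIio (q - r)) ⊓ f (oIio ((k + 1) * r)))
    k r le_rfl

lemma limUpper_anti : Antitone (limUpper g f N) := fun a b hab =>
  iSup₂_le fun k r =>
    (inf_le_inf_right _ (OrderHomClass.mono _ (oIoi_anti (by linarith)))).trans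
      (le_limUpper a k r)

lemma limLower_mono : Monotone (limLower g f N) := fun a b hab =>
  iSup₂_le fun k r =>
    (inf_le_inf_right _ (OrderHomClass.mono _ (oIio_mono (by linarith)))).trans
      (le_limLower b k r)

lemma limUpper_eq_iSup (p : ℝ) :
    limUpper g f N p = ⨆ (p' : ℝ) (_ : p < p'), limUpper g f N p' := by
  refine le_antisymm (iSup₂_le fun k r => ?_) (iSup₂_le fun p' hp => limUpper_anti hp.le)
  rw [oIoi_eq_iSup, map_iSup₂]
  simp only [iSup_inf_eq]
  refine iSup₂_le fun b hb => le_iSup₂_of_le (b - r) (by linarith) ?_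
  simpa using le_limUpper (g := g) (f := f) (N := N) (b - r) k r

lemma limLower_eq_iSup (q : ℝ) :
    limLower g f N q = ⨆ (q' : ℝ) (_ : q' < q), limLower g f N q' := by
  refine le_antisymm (iSup₂_le fun k r => ?_) (iSup₂_le fun q' hq => limLower_mono hq.le)
  rw [oIio_eq_iSup, map_iSup₂]
  simp only [iSup_inf_eq]
  refine iSup₂_le fun b hb => le_iSup₂_of_le (b + r) (by linarith) ?_
  simpa using le_limLower (g := g) (f := f) (N := N) (b + r) k r

lemma iSup_limUpper : ⨆ p, limUpper g f N p = ⊤ := by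
  refine top_le_iff.1 ?_
  rw [← f.iSup_map_eq_top iSup_oIio]
  refine iSup_le fun r => ?_
  calc f (oIio r) = ⨆ p, g (N 0) (oIoi (p + r)) ⊓ f (oIio r) := by
        rw [← iSup_inf_eq, (g (N 0)).iSup_map_eq_top (iSup_oIoi_add r), top_inf_eq]
    _ ≤ _ := iSup_mono fun p => by simpa using le_limUpper (g := g) (f := f) (N := N) p 0 r

lemma iSup_limLower : ⨆ q, limLower g f N q = ⊤ := by
  refine top_le_iff.1 ?_
  rw [← f.iSup_map_eq_top iSup_oIio]
  refine iSup_le fun r => ?_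
  calc f (oIio r) = ⨆ q, g (N 0) (oIio (q - r)) ⊓ f (oIio r) := by
        rw [← iSup_inf_eq, (g (N 0)).iSup_map_eq_top (iSup_oIio_sub r), top_inf_eq]
    _ ≤ _ := iSup_mono fun q => by simpa using le_limLower (g := g) (f := f) (N := N) q 0 r

lemma limUpper_sup_limLower {p q : ℝ} (hpq : p < q) :
    limUpper g f N p ⊔ limLower g f N q = ⊤ := by
  set δ := (q - p) / 3 with hδ
  refine top_le_iff.1 ?_
  rw [← f.iSup_map_eq_top (iSup_oIio_nat_mul (δ := δ) (by positivity))]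
  refine iSup_le fun k => ?_
  calc f (oIio ((k + 1) * δ))
      = (g (N k) (oIoi (p + δ)) ⊔ g (N k) (oIio (q - δ))) ⊓ f (oIio ((k + 1) * δ)) := by
        rw [← map_sup, oIoi_sup_oIio_eq_top (by linarith), map_top, top_inf_eq]
    _ ≤ _ := by
        rw [inf_sup_right]
        exact sup_le_sup (le_limUpper p k δ) (le_limLower q k δ)

lemma IsRUCauchyModulus.le_min (hC : IsRUCauchyModulus g f N) (hN : Monotone N) {k l i j : ℕ}
    (hi : N k ≤ i) (hj : N l ≤ j) {s ε : ℝ} (hε : 0 < ε) :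
    g i (oIio s) ⊓ g j (oIoi (s + ε)) ≤ f (oIoi ((min k l + 1 : ℕ) * ε)) := by
  simpa using hC (min k l) i j ((hN (min_le_left k l)).trans hi)
    ((hN (min_le_right k l)).trans hj) s ε hε

lemma map_oIio_eq_bot (hf : f (oIio 0) = ⊥) {t : ℝ} (ht : t ≤ 0) : f (oIio t) = ⊥ :=
  le_bot_iff.1 (hf ▸ OrderHomClass.mono f (oIio_mono ht))

lemma inf_map_oIio_le (hf : f (oIio 0) = ⊥) {k k' : ℕ} {r ε : ℝ} (hε : 0 < ε) {X : M}
    (hX : 0 < r → X ≤ f (oIoi ((min k' k + 1 : ℕ) * (r + ε)))) :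
    X ⊓ f (oIio ((k' + 1) * r)) ≤ f (oIoi ((k + 1) * ε)) := by
  rcases le_or_gt r 0 with hr | hr
  · rw [map_oIio_eq_bot hf (by nlinarith), inf_bot_eq]
    exact bot_le
  refine (inf_le_inf_right _ (hX hr)).trans ?_
  rw [← map_inf]
  refine OrderHomClass.mono f fun x ⟨hx₁, hx₂⟩ => ?_
  simp only [SetLike.mem_coe, mem_oIoi, mem_oIio] at hx₁ hx₂ ⊢
  rcases le_total k' k with h | h
  · rw [min_eq_left h] at hx₁
    push_cast at hx₁
    nlinarith
  · rw [min_eq_right h] at hx₁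
    push_cast at hx₁
    nlinarith [mul_pos (by positivity : (0 : ℝ) < k + 1) hr]

variable (hf : f (oIio 0) = ⊥) (hC : IsRUCauchyModulus g f N) (hN : Monotone N)
include hf hC hN

lemma limLower_inf_le {k n : ℕ} (hn : N k ≤ n) (s : ℝ) {ε : ℝ} (hε : 0 < ε) :
    limLower g f N s ⊓ g n (oIoi (s + ε)) ≤ f (oIoi ((k + 1) * ε)) := by
  simp only [limLower, iSup_inf_eq]
  refine iSup₂_le fun k' r => ?_
  rw [inf_right_comm]
  refine inf_map_oIio_le hf hε fun hr => ?_
  have h := hC.le_min hN (k := k') le_rfl hn (s := s - r) (add_pos hr hε)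
  rwa [show s - r + (r + ε) = s + ε by ring] at h

lemma inf_limUpper_le {k n : ℕ} (hn : N k ≤ n) (s : ℝ) {ε : ℝ} (hε : 0 < ε) :
    g n (oIio s) ⊓ limUpper g f N (s + ε) ≤ f (oIoi ((k + 1) * ε)) := by
  simp only [limUpper, inf_iSup_eq]
  refine iSup₂_le fun k' r => ?_
  rw [← inf_assoc]
  refine inf_map_oIio_le hf hε fun hr => ?_
  rw [min_comm]
  simpa [add_assoc, add_comm r] using hC.le_min hN (l := k') hn le_rfl (s := s) (add_pos hr hε)

lemma limUpper_inf_limLower {p q : ℝ} (hqp : q ≤ p) :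
    limUpper g f N p ⊓ limLower g f N q = ⊥ := by
  refine le_bot_iff.1 ?_
  simp only [limUpper, iSup_inf_eq]
  refine iSup₂_le fun k r => ?_
  rcases le_or_gt r 0 with hr | hr
  · rw [map_oIio_eq_bot hf (by nlinarith), inf_bot_eq, bot_inf_eq]
  have hε : 0 < p + r - q := by linarith
  calc g (N k) (oIoi (p + r)) ⊓ f (oIio ((k + 1) * r)) ⊓ limLower g f N q
      ≤ limLower g f N q ⊓ g (N k) (oIoi (q + (p + r - q))) ⊓ f (oIio ((k + 1) * r)) := by
        rw [add_sub_cancel]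
        exact le_inf (le_inf inf_le_right (inf_le_left.trans inf_le_left))
          (inf_le_left.trans inf_le_right)
    _ ≤ f (oIoi ((k + 1) * (p + r - q))) ⊓ f (oIio ((k + 1) * r)) :=
        inf_le_inf_right _ (limLower_inf_le hf hC hN le_rfl q hε)
    _ = ⊥ := by
        rw [← map_inf, oIoi_inf_oIio_eq_bot (by nlinarith), map_bot]

variable (g f N) in
def limitCut : RealCut M where
  upper := limUpper g f N
  lower := limLower g f N
  upper_eq_iSup := limUpper_eq_iSup
  lower_eq_iSup := limLower_eq_iSup
  upper_inf_lower := limUpper_inf_limLower hf hC hN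
  upper_sup_lower := limUpper_sup_limLower
  iSup_upper := iSup_limUpper
  iSup_lower := iSup_limLower

end RelativelyUniformLimit

/-- Theorem 12: `ℛM` is relatively uniformly Cauchy complete.  If a sequence of frame
homomorphisms `Opens ℝ → M` is relatively uniformly Cauchy with nonnegative regulator `f`,
then it converges relatively uniformly, with regulator `f`, to some frame homomorphism
`g₀ : Opens ℝ → M`. -/
theorem ruCauchy_complete {M : Type*} [Order.Frame M]
    (g : ℕ → FrameHom (Opens ℝ) M) (f : FrameHom (Opens ℝ) M) (hf : f (oIio 0) = ⊥)
    (hC : ∀ k : ℕ, 0 < k → ∃ m : ℕ, ∀ i, m ≤ i → ∀ j, m ≤ j → ∀ ε : ℝ, 0 < ε →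
      (⨆ s : ℝ, (g i (oIio s) ⊓ g j (oIoi (s + ε))) ⊔ (g j (oIio s) ⊓ g i (oIoi (s + ε)))) ≤
        f (oIoi ((k : ℝ) * ε))) :
    ∃ g₀ : FrameHom (Opens ℝ) M, ∀ k : ℕ, 0 < k → ∃ m : ℕ, ∀ n, m ≤ n → ∀ ε : ℝ, 0 < ε →
      (⨆ s : ℝ, (g₀ (oIio s) ⊓ g n (oIoi (s + ε))) ⊔ (g n (oIio s) ⊓ g₀ (oIoi (s + ε)))) ≤
        f (oIoi ((k : ℝ) * ε)) := by
  obtain ⟨N, hN, hCN⟩ : ∃ N : ℕ → ℕ, StrictMono N ∧ IsRUCauchyModulus g f N := by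
    refine Filter.extraction_forall_of_eventually (P := fun k m => ∀ i j, m ≤ i → m ≤ j →
      ∀ s ε : ℝ, 0 < ε → g i (oIio s) ⊓ g j (oIoi (s + ε)) ≤ f (oIoi ((k + 1) * ε))) fun k => ?_
    obtain ⟨m, hm⟩ := hC (k + 1) k.succ_pos
    refine Filter.eventually_atTop.2 ⟨m, fun n hn i j hi hj s ε hε => ?_⟩
    refine le_trans ?_ ((hm i (hn.trans hi) j (hn.trans hj) ε hε).trans_eq (by push_cast; rfl))
    exact le_iSup_of_le (f := fun s => _ ⊔ _) s le_sup_left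
  let c := limitCut g f N hf hCN hN.monotone
  refine ⟨c.toFrameHom, fun k hk => ?_⟩
  obtain ⟨k, rfl⟩ := Nat.exists_eq_add_one_of_ne_zero hk.ne'
  refine ⟨N k, fun n hn ε hε => iSup_le fun s => sup_le ?_ ?_⟩
  · rw [c.toFrameHom_oIio]
    exact_mod_cast limLower_inf_le hf hCN hN.monotone hn s hε
  · rw [c.toFrameHom_oIoi]
    exact_mod_cast inf_limUpper_le hf hCN hN.monotone hn s hε
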